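/- Let V be a Hilbert space with inner product ((·,·)) and norm ‖·‖, and define 𝔸 : V → V' by ⟨𝔸u, v⟩ = ν₀‖u‖²((u,v)) for a constant ν₀ > 0. Then 𝔸 is monotone: for all u, v ∈ V, ⟨𝔸u − 𝔸v, u − v⟩ ≥ 0. -/
import Mathlib


open InnerProductSpace

theorem nonlinear_viscosity_monotone
    {V : Type*} [NormedAddCommGroup V] [InnerProductSpace ℝ V]
    (ν₀ : ℝ) (hν₀ : 0 < ν₀)
    (𝔸 : V → (V →L[ℝ] ℝ))
    (h𝔸 : ∀ u v : V, 𝔸 u v = ν₀ * ‖u‖ ^ 2 * ⟪u, v⟫_ℝ) :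
    ∀ u v : V, 0 ≤ (𝔸 u - 𝔸 v) (u - v) := by
  intro u v
  have h1 : ⟪u, v⟫_ℝ ≤ ‖u‖ * ‖v‖ := real_inner_le_norm u v
  have h2 : ⟪u, u⟫_ℝ = ‖u‖ ^ 2 := real_inner_self_eq_norm_sq u
  have h3 : ⟪v, v⟫_ℝ = ‖v‖ ^ 2 := real_inner_self_eq_norm_sq v
  have h4 : ⟪v, u⟫_ℝ = ⟪u, v⟫_ℝ := real_inner_comm u v
  have hu : 0 ≤ ‖u‖ := norm_nonneg u
  have hv : 0 ≤ ‖v‖ := norm_nonneg v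
  set a := ‖u‖
  set b := ‖v‖
  set p := ⟪u, v⟫_ℝ
  have key : (a ^ 2 + b ^ 2) * p ≤ (a ^ 2 + b ^ 2) * (a * b) :=
    mul_le_mul_of_nonneg_left h1 (by positivity)
  have key2 : 0 ≤ a ^ 4 + b ^ 4 - (a ^ 2 + b ^ 2) * (a * b) := by
    have := mul_nonneg (sq_nonneg (a - b))
      (add_nonneg (add_nonneg (sq_nonneg a) (mul_nonneg hu hv)) (sq_nonneg b))
    nlinarith [sq_nonneg (a - b), mul_nonneg hu hv, sq_nonneg (a*a - b*b)]
  have key3 : 0 ≤ a ^ 4 + b ^ 4 - (a ^ 2 + b ^ 2) * p := by linarith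
  have final : 0 ≤ ν₀ * (a ^ 4 + b ^ 4 - (a ^ 2 + b ^ 2) * p) :=
    mul_nonneg hν₀.le key3
  simp only [ContinuousLinearMap.sub_apply, h𝔸, inner_sub_right, h2, h3, h4]
  ring_nf
  ring_nf at final
  linarith
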